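/- If G is a connected graph with res(G) = 3 and v is a vertex of degree 5, then the subgraph induced by N(v) is a 5-cycle. -/

import Mathlib

/-!
Let `H` be the graph induced on `N(v)`. For distinct `x, y ∈ N(v)` the set `{v, x, y}` resolves
`G`, and two vertices of `N(v)` are at distance 1 or 2 according to whether they are adjacent; hence
any two vertices of `H` outside `{x, y}` differ in their adjacency to `x` or to `y`. On five
vertices this forces `H` to be a 5-cycle. A vertex with three neighbours `b, c, d` would leave the
fifth vertex to separate all three pairs among `b, c, d`, which is impossible by parity. The
condition is self-complementary, so `H` is 2-regular, and the neighbourhoods of one vertex and of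
one of its neighbours then pin down the cycle.
-/

open SimpleGraph Finset

variable {V : Type*}

/-- A finite set `W` of vertices resolves `G` if distinct vertices have
distinct vectors of distances to the vertices of `W`. -/
def SimpleGraph.IsResolvingSet (G : SimpleGraph V) (W : Finset V) : Prop :=
  ∀ u v : V, (∀ w ∈ W, G.dist u w = G.dist v w) → u = v

/-- The metric dimension of `G`: the minimum cardinality of a resolving set. -/
noncomputable def SimpleGraph.metricDim (G : SimpleGraph V) [Fintype V] : ℕ :=
  sInf {k | ∃ W : Finset V, W.card = k ∧ G.IsResolvingSet W}

/-- `G` is randomly `k`-dimensional: `G` is connected, has metric dimension `k`,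
and every `k`-subset of vertices is a (minimum) resolving set, i.e. a basis. -/
def SimpleGraph.RandomlyKDim (G : SimpleGraph V) [Fintype V] (k : ℕ) : Prop :=
  G.Connected ∧ G.metricDim = k ∧ ∀ W : Finset V, W.card = k → G.IsResolvingSet W

/-- The resolving number of `G`: the minimum `k` such that every `k`-subset of
vertices is a resolving set. -/
noncomputable def SimpleGraph.resolvingNumber (G : SimpleGraph V) [Fintype V] : ℕ :=
  sInf {k | ∀ W : Finset V, W.card = k → G.IsResolvingSet W}

theorem Finset.exists_notMem_of_card_lt [Fintype V] {s : Finset V} (h : #s < Fintype.card V) :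
    ∃ x, x ∉ s := by
  obtain ⟨x, -, hx⟩ := exists_mem_notMem_of_card_lt_card (t := univ) (by simpa using h)
  exact ⟨x, hx⟩

namespace SimpleGraph

variable {G H : SimpleGraph V}

theorem nonempty_iso_cycleGraph_five_of_adj [Fintype V]
    (hcard : Fintype.card V = 5) (f : Fin 5 → V) (hf : Function.Injective f)
    (hadj : ∀ i, H.Adj (f i) (f (i + 1))) (hnadj : ∀ i, ¬H.Adj (f i) (f (i + 2))) :
    Nonempty (H ≃g cycleGraph 5) := by
  have hbij : Function.Bijective f :=
    (Fintype.bijective_iff_injective_and_card f).2 ⟨hf, by simp [hcard]⟩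
  refine ⟨Iso.symm ⟨Equiv.ofBijective f hbij, fun {i j} => ?_⟩⟩
  obtain ⟨k, rfl⟩ : ∃ k, j = i + k := ⟨j - i, by abel⟩
  have hcyc : (cycleGraph 5).Adj i (i + k) ↔ k = 1 ∨ k = 4 := by
    revert i k; decide
  rw [Equiv.ofBijective_apply, Equiv.ofBijective_apply, hcyc]
  fin_cases k
  · simp
  · simpa using hadj i
  · simpa using hnadj i
  · simpa [add_assoc, H.adj_comm] using hnadj (i + 3)
  · simpa [add_assoc, H.adj_comm] using hadj (i + 4)

theorem exists_adj_iff_of_degree_eq_two {a : V}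
    [Fintype (H.neighborSet a)] (h : H.degree a = 2) :
    ∃ b e, b ≠ e ∧ ∀ x, H.Adj a x ↔ x = b ∨ x = e := by
  classical
  obtain ⟨b, e, hbe, hN⟩ := card_eq_two.1 ((card_neighborFinset_eq_degree H a).trans h)
  exact ⟨b, e, hbe, fun x => by rw [← mem_neighborFinset, hN, mem_insert, mem_singleton]⟩

def PairsAdjResolve (H : SimpleGraph V) : Prop :=
  ∀ ⦃u u' x y : V⦄, x ≠ y → x ≠ u → x ≠ u' → y ≠ u → y ≠ u' →
    (H.Adj u x ↔ H.Adj u' x) → (H.Adj u y ↔ H.Adj u' y) → u = u'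

namespace PairsAdjResolve

theorem compl (hH : H.PairsAdjResolve) : Hᶜ.PairsAdjResolve := by
  intro u u' x y hxy hxu hxu' hyu hyu' hx hy
  simp only [compl_adj] at hx hy
  exact hH hxy hxu hxu' hyu hyu' (by grind) (by grind)

theorem degree_le_two [Fintype V] [DecidableRel H.Adj] (hH : H.PairsAdjResolve)
    (hcard : 5 ≤ Fintype.card V) (a : V) : H.degree a ≤ 2 := by
  classical
  by_contra! h
  rw [← card_neighborFinset_eq_degree, two_lt_card_iff] at h
  obtain ⟨b, c, d, hb, hc, hd, hbc, hbd, hcd⟩ := h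
  rw [mem_neighborFinset] at hb hc hd
  obtain ⟨e, he⟩ : ∃ e, e ∉ ({a, b, c, d} : Finset V) :=
    exists_notMem_of_card_lt (card_le_four.trans_lt (by omega))
  simp only [mem_insert, mem_singleton, not_or] at he
  obtain ⟨hea, heb, hec, hed⟩ := he
  have hab := hb.ne; have hac := hc.ne; have had := hd.ne
  have hbc' := hH (Ne.symm hea) hab hac heb hec (iff_of_true hb.symm hc.symm)
  have hbd' := hH (Ne.symm hea) hab had heb hed (iff_of_true hb.symm hd.symm)
  have hcd' := hH (Ne.symm hea) hac had hec hed (iff_of_true hc.symm hd.symm)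
  tauto

theorem degree_eq_two [Fintype V] [DecidableRel H.Adj] (hH : H.PairsAdjResolve)
    (hcard : Fintype.card V = 5) (a : V) : H.degree a = 2 := by
  classical
  have h := hH.compl.degree_le_two hcard.ge a
  rw [degree_compl, hcard] at h
  have := hH.degree_le_two hcard.ge a
  omega

theorem nonempty_iso_cycleGraph_five_of_adj_iff [Fintype V] (hH : H.PairsAdjResolve)
    (hcard : Fintype.card V = 5) {a b c e : V} (hbe : b ≠ e) (hca : c ≠ a)
    (hadjA : ∀ x, H.Adj a x ↔ x = b ∨ x = e) (hadjB : ∀ x, H.Adj b x ↔ x = a ∨ x = c) :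
    Nonempty (H ≃g cycleGraph 5) := by
  classical
  have hab : H.Adj a b := (hadjA b).2 (Or.inl rfl)
  have hae : H.Adj a e := (hadjA e).2 (Or.inr rfl)
  have hbc : H.Adj b c := (hadjB c).2 (Or.inr rfl)
  -- if `c = e`, neither `c` nor a fifth vertex separates `a` from `b`
  have hce : c ≠ e := by
    rintro rfl
    obtain ⟨x, hx⟩ := exists_notMem_of_card_lt (s := {a, b, c})
      (card_le_three.trans_lt (by omega))
    simp only [mem_insert, mem_singleton, not_or] at hx
    exact hab.ne (hH (x := c) (y := x) (by grind) hca (by grind) (by grind) (by grind)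
      (iff_of_true hae hbc) (by simp [hadjA, hadjB, hx]))
  obtain ⟨d, hd⟩ := exists_notMem_of_card_lt (s := {a, b, c, e})
    (card_le_four.trans_lt (by omega))
  simp only [mem_insert, mem_singleton, not_or] at hd
  obtain ⟨hda, hdb, hdc, hd_ne_e⟩ := hd
  -- `b` does not separate `a` from `c`, so `d` and `e` do
  have hcd : H.Adj c d := by
    by_contra h
    exact hca.symm (hH (x := b) (y := d) (by grind) hab.ne.symm hbc.ne hda hdc
      (iff_of_true hab hbc.symm) (by simp [hadjA, hdb, hd_ne_e, h]))
  have hnce : ¬H.Adj c e := fun h => hca.symm (hH (x := b) (y := e) hbe hab.ne.symm hbc.ne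
      hae.ne.symm hce.symm (iff_of_true hab hbc.symm) (iff_of_true hae h))
  -- `c` does not separate `b` from `d`, so `e` does
  have hde : H.Adj d e := by
    by_contra h
    exact Ne.symm hdb (hH (x := c) (y := e) hce hbc.ne.symm (Ne.symm hdc) hbe.symm (Ne.symm hd_ne_e)
      (iff_of_true hbc hcd.symm) (by simp [hadjB, hae.ne.symm, hce.symm, h]))
  refine nonempty_iso_cycleGraph_five_of_adj hcard ![a, b, c, d, e] ?_ ?_ ?_
  · intro i j hij
    fin_cases i <;> fin_cases j <;>
      simp only [Fin.zero_eta, Fin.mk_one, Fin.reduceFinMk, Fin.isValue, Fin.reduceEq,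
        Matrix.cons_val_zero, Matrix.cons_val_one, Matrix.cons_val] at hij ⊢ <;>
      grind [SimpleGraph.irrefl]
  · intro i
    fin_cases i <;> simp [hab, hbc, hcd, hde, hae.symm]
  · intro i
    fin_cases i <;>
      simp only [Fin.zero_eta, Fin.mk_one, Fin.reduceFinMk, Fin.isValue, Fin.reduceAdd,
        Matrix.cons_val_zero, Matrix.cons_val_one, Matrix.cons_val] <;>
      grind [SimpleGraph.adj_symm]

theorem nonempty_iso_cycleGraph_five [Fintype V] (hH : H.PairsAdjResolve)
    (hcard : Fintype.card V = 5) : Nonempty (H ≃g cycleGraph 5) := by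
  classical
  obtain ⟨a⟩ : Nonempty V := Fintype.card_pos_iff.1 (by omega)
  obtain ⟨b, e, hbe, hadjA⟩ := exists_adj_iff_of_degree_eq_two (hH.degree_eq_two hcard a)
  obtain ⟨p, q, hpq, hadjB⟩ := exists_adj_iff_of_degree_eq_two (hH.degree_eq_two hcard b)
  rcases (hadjB a).1 ((hadjA b).2 (Or.inl rfl)).symm with rfl | rfl
  · exact hH.nonempty_iso_cycleGraph_five_of_adj_iff hcard hbe hpq.symm hadjA hadjB
  · exact hH.nonempty_iso_cycleGraph_five_of_adj_iff hcard hbe hpq hadjA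
      (fun x => (hadjB x).trans or_comm)

end PairsAdjResolve

theorem isResolvingSet_of_card_eq_resolvingNumber [Fintype V] {W : Finset V}
    (hW : #W = G.resolvingNumber) : G.IsResolvingSet W :=
  Nat.sInf_mem (s := {k | ∀ W : Finset V, #W = k → G.IsResolvingSet W})
    ⟨Fintype.card V + 1, fun W hW => absurd hW (by have := card_le_univ W; omega)⟩ W hW

theorem dist_eq_two_of_adj_of_adj {v a b : V} (ha : G.Adj v a) (hb : G.Adj v b) (hab : a ≠ b)
    (h : ¬G.Adj a b) : G.dist a b = 2 := by
  have hle : G.dist a b ≤ 2 := dist_le (.cons ha.symm (.cons hb .nil))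
  have hlt := (ha.symm.reachable.trans hb.reachable).one_lt_dist_of_ne_of_not_adj hab h
  omega

theorem dist_eq_dist_of_adj_iff_adj {v a a' b : V} (ha : G.Adj v a) (ha' : G.Adj v a')
    (hb : G.Adj v b) (hab : a ≠ b) (ha'b : a' ≠ b) (h : G.Adj a b ↔ G.Adj a' b) :
    G.dist a b = G.dist a' b := by
  by_cases hadj : G.Adj a b
  · rw [dist_eq_one_iff_adj.2 hadj, dist_eq_one_iff_adj.2 (h.1 hadj)]
  · rw [dist_eq_two_of_adj_of_adj ha hb hab hadj,
      dist_eq_two_of_adj_of_adj ha' hb ha'b (h.not.1 hadj)]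

theorem pairsAdjResolve_induce_neighborSet
    (h3 : ∀ W : Finset V, #W = 3 → G.IsResolvingSet W) (v : V) :
    (G.induce (G.neighborSet v)).PairsAdjResolve := by
  classical
  rintro ⟨u, hu⟩ ⟨u', hu'⟩ ⟨x, hx⟩ ⟨y, hy⟩ hxy hxu hxu' hyu hyu' hxsep hysep
  simp only [ne_eq, Subtype.mk.injEq, comap_adj, Function.Embedding.subtype_apply] at *
  have hcard : #{v, x, y} = 3 := by
    rw [card_insert_of_notMem (by simp [hx.ne, hy.ne]), card_pair hxy]
  refine h3 _ hcard u u' ?_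
  simp only [mem_insert, mem_singleton, forall_eq_or_imp, forall_eq]
  refine ⟨?_, dist_eq_dist_of_adj_iff_adj hu hu' hx (Ne.symm hxu) (Ne.symm hxu') hxsep,
    dist_eq_dist_of_adj_iff_adj hu hu' hy (Ne.symm hyu) (Ne.symm hyu') hysep⟩
  rw [dist_comm, dist_eq_one_iff_adj.2 hu, dist_comm, dist_eq_one_iff_adj.2 hu']

end SimpleGraph

theorem stmt16_general [Fintype V] (G : SimpleGraph V) [DecidableRel G.Adj]
    (hres : G.resolvingNumber = 3) (v : V)
    (hv : G.degree v = 5) :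
    Nonempty ((G.induce (G.neighborSet v)) ≃g cycleGraph 5) := by
  have hN := G.pairsAdjResolve_induce_neighborSet
    (fun W hW => isResolvingSet_of_card_eq_resolvingNumber (hW.trans hres.symm)) v
  exact hN.nonempty_iso_cycleGraph_five (by rw [card_neighborSet_eq_degree, hv])

theorem stmt16 [Fintype V] (G : SimpleGraph V) [DecidableRel G.Adj]
    (hG : G.Connected) (hres : G.resolvingNumber = 3) (v : V)
    (hv : G.degree v = 5) :
    Nonempty ((G.induce (G.neighborSet v)) ≃g cycleGraph 5) :=
  stmt16_general G hres v hv
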